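/- In the frog model with drift parameter p ∈ (1/2, 1), almost surely (S_{T_i}^i − i) / T_i converges to 2p − 1 − v_max as i → ∞ along the non-negative integers, where v_max is the speed of the maximum. -/

import Mathlib

open MeasureTheory ProbabilityTheory Filter
open scoped ENNReal NNReal Topology

/-- The trajectory attached to the frog starting at site `i`:
`frogS X ω i n = ∑_{k=1}^n X_k^i(ω)` is its displacement `n` steps after its activation. -/
def frogS {Ω : Type*} (X : ℤ → ℕ → Ω → ℤ) (ω : Ω) (i : ℤ) (n : ℕ) : ℤ :=
  ∑ k ∈ Finset.Icc 1 n, X i k ω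

/-- First time (as an element of `ℕ∞`) at which the walk attached to frog `j`
(which starts at `j`) visits site `i`. -/
noncomputable def hitTime (S : ℤ → ℕ → ℤ) (j i : ℤ) : ℕ∞ :=
  sInf {t : ℕ∞ | ∃ n : ℕ, t = n ∧ j + S j n = i}

/-- Activation time `T_i` of the frog initially at site `i`, in the frog model with one
active frog at `0` and one sleeping frog at every other site: since every activated frog
follows its attached trajectory from its activation time onwards, `T_i` is the
first-passage-percolation infimum over activation chains `0 = c 0, c 1, …, c m = i` of the
sums of the successive hitting times.  This is the (unique, canonical) solution of
`T_0 = 0`, `T_i = inf {n ∈ ℕ : ∃ j, T_j ≤ n ∧ j + S^j_{n - T_j} = i}`. -/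
noncomputable def frogT (S : ℤ → ℕ → ℤ) (i : ℤ) : ℕ∞ :=
  sInf {t : ℕ∞ | ∃ (m : ℕ) (c : ℕ → ℤ), c 0 = 0 ∧ c m = i ∧
    t = ∑ l ∈ Finset.range m, hitTime S (c l) (c (l + 1))}

/-- Activation times `T_i⁺` in the frog model without negative frogs (one active frog at `0`,
one sleeping frog at every positive integer site and no frogs at negative sites):
only activation chains staying in the non-negative integers are available. -/
noncomputable def frogTplus (S : ℤ → ℕ → ℤ) (i : ℤ) : ℕ∞ :=
  sInf {t : ℕ∞ | ∃ (m : ℕ) (c : ℕ → ℤ), c 0 = 0 ∧ c m = i ∧ (∀ l ≤ m, 0 ≤ c l) ∧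
    t = ∑ l ∈ Finset.range m, hitTime S (c l) (c (l + 1))}

/-- Position `Z_n^i` of frog `i` at time `n`: it sits at `i` until its activation time and
then follows its attached trajectory. -/
noncomputable def frogZ (S : ℤ → ℕ → ℤ) (n : ℕ) (i : ℤ) : ℤ :=
  if frogT S i ≤ (n : ℕ∞) then i + S i (n - (frogT S i).toNat) else i

/-- `M_n`, the maximum of the positions of the active frogs at time `n`. -/
noncomputable def frogM (S : ℤ → ℕ → ℤ) (n : ℕ) : ℤ :=
  sSup {z : ℤ | ∃ i : ℤ, frogT S i ≤ (n : ℕ∞) ∧ frogZ S n i = z}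

/-- `m_n`, the minimum of the positions of the active frogs at time `n`. -/
noncomputable def frogm (S : ℤ → ℕ → ℤ) (n : ℕ) : ℤ :=
  sInf {z : ℤ | ∃ i : ℤ, frogT S i ≤ (n : ℕ∞) ∧ frogZ S n i = z}

/-- The set `A_n` of active frogs at time `n`, as a `Finset`.  (Activation spreads with
speed at most one, so all active frogs lie in `[-n, n]`.) -/
noncomputable def frogA (S : ℤ → ℕ → ℤ) (n : ℕ) : Finset ℤ :=
  (Finset.Icc (-(n : ℤ)) n).filter fun i => frogT S i ≤ (n : ℕ∞)

/-- The random input of the frog model on `ℤ` with drift parameter `p`: an i.i.d. family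
`(X_k^i)_{i ∈ ℤ, k ∈ ℕ}` with `P(X_k^i = 1) = p = 1 - P(X_k^i = -1)`. -/
structure IsFrogModel {Ω : Type*} [MeasurableSpace Ω] (P : Measure Ω)
    (X : ℤ → ℕ → Ω → ℤ) (p : ℝ) : Prop where
  meas : ∀ i k, Measurable (X i k)
  indep : iIndepFun (fun ik : ℤ × ℕ => X ik.1 ik.2) P
  prob_one : ∀ i k, P {ω | X i k ω = 1} = ENNReal.ofReal p
  prob_neg_one : ∀ i k, P {ω | X i k ω = -1} = ENNReal.ofReal (1 - p)

/-! At its activation time `T_i`, frog `i ≥ 0` is the rightmost active frog: a frog started to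
the left of `i` would have activated `i` while crossing it, and frogs to the right of `i` are
woken only after `i`. So `M_{T_i} = i`, and `i / T_i → vmax` because `T_i ≥ i → ∞`. On the other
hand, Hoeffding's inequality and Borel–Cantelli give a law of large numbers for the walk of frog
`i` that is uniform over all times `n ≥ i`, hence applies at `n = T_i`:
`S^i_{T_i} / T_i → 2p - 1`. Subtracting the two limits gives the claim. The times `T_i` are
finite because frog `0` drifts to `+∞` and visits every `i ≥ 0`. -/

lemma exists_le_lt_succ_of_le_of_lt {α : Type*} [LinearOrder α] {f : ℕ → α} {a : α} {n : ℕ}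
    (h0 : f 0 ≤ a) (hn : a < f n) : ∃ l < n, f l ≤ a ∧ a < f (l + 1) := by
  induction n with
  | zero => exact absurd hn h0.not_gt
  | succ n ih =>
    by_cases h : a < f n
    · obtain ⟨l, hl, hla⟩ := ih h
      exact ⟨l, by omega, hla⟩
    · exact ⟨n, n.lt_succ_self, not_lt.1 h, hn⟩

/-- Discrete intermediate value theorem. -/
lemma exists_lt_eq_of_le_of_lt {f : ℕ → ℤ} (hf : ∀ n, f (n + 1) ≤ f n + 1) {a : ℤ} {n : ℕ}
    (h0 : f 0 ≤ a) (hn : a < f n) : ∃ s < n, f s = a := by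
  obtain ⟨s, hs, hsa, has⟩ := exists_le_lt_succ_of_le_of_lt h0 hn
  exact ⟨s, hs, by linarith [hf s]⟩

lemma le_add_of_succ_le_add_one {f : ℕ → ℤ} (hf : ∀ n, f (n + 1) ≤ f n + 1) (n : ℕ) :
    f n ≤ f 0 + n := by
  induction n with
  | zero => simp
  | succ n ih => push_cast; linarith [hf n]

lemma ENat.sInf_mem_of_ne_top {s : Set ℕ∞} (h : sInf s ≠ ⊤) : sInf s ∈ s :=
  csInf_mem (Set.nonempty_iff_ne_empty.2 fun hs => h (by rw [hs, sInf_empty]))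

section FrogModel

variable {S : ℤ → ℕ → ℤ}

lemma hitTime_le {j i : ℤ} {n : ℕ} (h : j + S j n = i) : hitTime S j i ≤ n :=
  sInf_le ⟨n, rfl, h⟩

lemma exists_hitTime_eq {j i : ℤ} (h : hitTime S j i ≠ ⊤) :
    ∃ n : ℕ, hitTime S j i = n ∧ j + S j n = i := by
  obtain ⟨n, hn, hjn⟩ := ENat.sInf_mem_of_ne_top h
  exact ⟨n, hn, hjn⟩

lemma toNat_sub_le_hitTime (hS0 : ∀ j, S j 0 = 0) (hS : ∀ j n, S j (n + 1) ≤ S j n + 1)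
    (j i : ℤ) : ((i - j).toNat : ℕ∞) ≤ hitTime S j i := by
  refine le_sInf ?_
  rintro _ ⟨n, rfl, hn⟩
  have := le_add_of_succ_le_add_one (hS j) n
  rw [hS0] at this
  exact_mod_cast (show (i - j).toNat ≤ n by omega)

lemma exists_chain_eq_frogT {i : ℤ} (h : frogT S i ≠ ⊤) : ∃ (m : ℕ) (c : ℕ → ℤ), c 0 = 0 ∧
    c m = i ∧ frogT S i = ∑ l ∈ Finset.range m, hitTime S (c l) (c (l + 1)) :=
  ENat.sInf_mem_of_ne_top h

lemma frogT_le_sum_add_hitTime {m : ℕ} {c : ℕ → ℤ} (hc0 : c 0 = 0) (i : ℤ) :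
    frogT S i ≤ ∑ l ∈ Finset.range m, hitTime S (c l) (c (l + 1)) + hitTime S (c m) i := by
  have hc : ∀ l ≤ m, Function.update c (m + 1) i l = c l := fun l hl =>
    Function.update_of_ne (by omega) _ _
  refine sInf_le ⟨m + 1, Function.update c (m + 1) i, by rw [hc 0 (by omega), hc0], by simp, ?_⟩
  rw [Finset.sum_range_succ, hc m le_rfl, Function.update_self]
  congr 1
  refine Finset.sum_congr rfl fun l hl => ?_
  rw [Finset.mem_range] at hl
  rw [hc l (by omega), hc (l + 1) (by omega)]

lemma frogT_le_hitTime_zero (i : ℤ) : frogT S i ≤ hitTime S 0 i := by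
  simpa using frogT_le_sum_add_hitTime (S := S) (m := 0) (c := fun _ => 0) rfl i

lemma frogT_le_frogT_add_hitTime (j i : ℤ) : frogT S i ≤ frogT S j + hitTime S j i := by
  by_cases hj : frogT S j = ⊤
  · simp [hj]
  obtain ⟨m, c, hc0, rfl, hT⟩ := exists_chain_eq_frogT hj
  rw [hT]
  exact frogT_le_sum_add_hitTime hc0 i

lemma toNat_le_frogT (hS0 : ∀ j, S j 0 = 0) (hS : ∀ j n, S j (n + 1) ≤ S j n + 1) (i : ℤ) :
    (i.toNat : ℕ∞) ≤ frogT S i := by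
  refine le_sInf ?_
  rintro _ ⟨m, c, hc0, rfl, rfl⟩
  suffices ∀ m, ((c m - c 0).toNat : ℕ∞) ≤ ∑ l ∈ Finset.range m, hitTime S (c l) (c (l + 1)) by
    simpa [hc0] using this m
  intro m
  induction m with
  | zero => simp
  | succ m ih =>
    rw [Finset.sum_range_succ]
    calc ((c (m + 1) - c 0).toNat : ℕ∞)
        ≤ ((c m - c 0).toNat : ℕ∞) + ((c (m + 1) - c m).toNat : ℕ∞) := by
          exact_mod_cast (show (c (m + 1) - c 0).toNat ≤ _ by omega)
      _ ≤ _ := add_le_add ih (toNat_sub_le_hitTime hS0 hS _ _)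

/-- Some walk of an optimal activation chain for `j` steps from `c l ≤ i` to `c (l + 1) > i`,
and so passes `i` strictly before its hitting time. -/
lemma frogT_lt_frogT (hS0 : ∀ j, S j 0 = 0) (hS : ∀ j n, S j (n + 1) ≤ S j n + 1) {i j : ℤ}
    (hi : 0 ≤ i) (hij : i < j) (hj : frogT S j ≠ ⊤) : frogT S i < frogT S j := by
  obtain ⟨m, c, hc0, hcm, hT⟩ := exists_chain_eq_frogT hj
  obtain ⟨l, hlm, hli, hil⟩ := exists_le_lt_succ_of_le_of_lt (f := c) (by omega) (hcm ▸ hij)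
  set pre := ∑ k ∈ Finset.range l, hitTime S (c k) (c (k + 1))
  have hle : pre + hitTime S (c l) (c (l + 1)) ≤ frogT S j := by
    rw [hT, ← Finset.sum_range_succ]
    exact Finset.sum_le_sum_of_subset (Finset.range_subset_range.2 hlm)
  have hpre : pre ≠ ⊤ := ne_top_of_le_ne_top hj (le_self_add.trans hle)
  obtain ⟨n, hn, hcn⟩ := exists_hitTime_eq (ne_top_of_le_ne_top hj (le_add_self.trans hle))
  obtain ⟨s, hsn, hs⟩ := exists_lt_eq_of_le_of_lt (f := fun s => c l + S (c l) s)
    (fun s => by linarith [hS (c l) s]) (by simp [hS0, hli]) (show i < c l + S (c l) n by omega)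
  calc frogT S i ≤ pre + hitTime S (c l) i := frogT_le_sum_add_hitTime hc0 i
    _ ≤ pre + s := by gcongr; exact hitTime_le hs
    _ < pre + n := (ENat.add_lt_add_iff_left hpre).2 (by exact_mod_cast hsn)
    _ ≤ frogT S j := hn ▸ hle

lemma frogT_ne_top_of_lt (hS0 : ∀ j, S j 0 = 0) (hS : ∀ j n, S j (n + 1) ≤ S j n + 1) {i : ℤ}
    (hi : 0 ≤ i) {n : ℕ} (hn : i < S 0 n) : frogT S i ≠ ⊤ := by
  obtain ⟨s, -, hs⟩ := exists_lt_eq_of_le_of_lt (hS 0) (by rw [hS0]; exact hi) hn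
  exact ne_top_of_le_ne_top (ENat.natCast_ne_top s)
    ((frogT_le_hitTime_zero i).trans (hitTime_le (by rw [zero_add, hs])))

/-- The frogs to the left of `i` cannot have crossed `i` before time `T_i`, and those to the
right of it are still asleep. -/
lemma frogZ_le_of_le_frogT (hS0 : ∀ j, S j 0 = 0) (hS : ∀ j n, S j (n + 1) ≤ S j n + 1)
    {i j : ℤ} (hi : 0 ≤ i) {n : ℕ} (hni : frogT S i = n) (hj : frogT S j ≤ n) :
    frogZ S n j ≤ i := by
  have hjtop : frogT S j ≠ ⊤ := ne_top_of_le_ne_top (ENat.natCast_ne_top n) hj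
  by_contra hlt
  rcases le_or_gt j i with hji | hij
  · rw [frogZ, if_pos hj] at hlt
    obtain ⟨s, hs, hsi⟩ := exists_lt_eq_of_le_of_lt (f := fun s => j + S j s)
      (fun s => by linarith [hS j s]) (by simp [hS0, hji]) (not_le.1 hlt)
    have : frogT S i < n := by
      calc frogT S i ≤ frogT S j + hitTime S j i := frogT_le_frogT_add_hitTime j i
        _ ≤ (frogT S j).toNat + s := by
          rw [ENat.natCast_toNat hjtop]; gcongr; exact hitTime_le hsi
        _ < n := by
          have : (frogT S j).toNat ≤ n := by
            rw [← ENat.natCast_le_natCast, ENat.natCast_toNat hjtop]; exact hj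
          exact_mod_cast (show (frogT S j).toNat + s < n by omega)
    exact this.ne hni
  · exact (frogT_lt_frogT hS0 hS hi hij hjtop).not_ge (hni ▸ hj)

lemma frogM_frogT_toNat (hS0 : ∀ j, S j 0 = 0) (hS : ∀ j n, S j (n + 1) ≤ S j n + 1) {i : ℤ}
    (hi : 0 ≤ i) (hT : frogT S i ≠ ⊤) : frogM S (frogT S i).toNat = i := by
  have hTn : frogT S i = (frogT S i).toNat := (ENat.natCast_toNat hT).symm
  have hZi : frogZ S (frogT S i).toNat i = i := by simp [frogZ, ← hTn, hS0]
  have hbdd : ∀ z ∈ {z : ℤ | ∃ j, frogT S j ≤ (frogT S i).toNat ∧ frogZ S (frogT S i).toNat j = z},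
      z ≤ i := by
    rintro _ ⟨j, hj, rfl⟩
    exact frogZ_le_of_le_frogT hS0 hS hi hTn hj
  exact le_antisymm (csSup_le ⟨i, i, hTn.le, hZi⟩ hbdd) (le_csSup ⟨i, hbdd⟩ ⟨i, hTn.le, hZi⟩)

end FrogModel

section Concentration

variable {Ω : Type*} [MeasurableSpace Ω] {P : Measure Ω}

/-- The union of the events `A i n` over `n ≥ i` has probability at most `C r ^ i / (1 - r)`,
which is summable in `i` (Borel–Cantelli). -/
lemma ae_eventually_forall_ge_notMem {A : ℕ → ℕ → Set Ω} {C r : ℝ≥0∞} (hC : C ≠ ⊤) (hr : r < 1)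
    (hA : ∀ i n, P (A i n) ≤ C * r ^ n) : ∀ᵐ ω ∂P, ∀ᶠ i in atTop, ∀ n ≥ i, ω ∉ A i n := by
  have hr' : (1 - r)⁻¹ ≠ ⊤ := ENNReal.inv_ne_top.2 (tsub_pos_of_lt hr).ne'
  have hB : ∀ i, P (⋃ d, A i (i + d)) ≤ C * (1 - r)⁻¹ * r ^ i := fun i =>
    calc P (⋃ d, A i (i + d)) ≤ ∑' d, C * r ^ (i + d) :=
          (measure_iUnion_le _).trans (ENNReal.tsum_le_tsum fun d => hA i (i + d))
      _ = C * (1 - r)⁻¹ * r ^ i := by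
          simp_rw [pow_add, ← mul_assoc, ENNReal.tsum_mul_left, ENNReal.tsum_geometric]; ring
  have hsum : ∑' i, P (⋃ d, A i (i + d)) ≠ ⊤ := by
    refine ne_top_of_le_ne_top ?_ (ENNReal.tsum_le_tsum hB)
    rw [ENNReal.tsum_mul_left, ENNReal.tsum_geometric]
    exact ENNReal.mul_ne_top (ENNReal.mul_ne_top hC hr') hr'
  filter_upwards [ae_eventually_notMem hsum] with ω hω
  filter_upwards [hω] with i hi n hn
  obtain ⟨d, rfl⟩ := Nat.exists_eq_add_of_le hn
  exact fun h => hi (Set.mem_iUnion.2 ⟨d, h⟩)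

/-- Hoeffding's inequality. -/
lemma measure_mul_card_le_sum_le {ι : Type*} {Y : ι → Ω → ℝ} (hY : iIndepFun Y P)
    (hsub : ∀ i, HasSubgaussianMGF (Y i) 1 P) (s : Finset ι) {δ : ℝ} (hδ : 0 ≤ δ) :
    P {ω | δ * s.card ≤ ∑ i ∈ s, Y i ω} ≤ ENNReal.ofReal (Real.exp (-δ ^ 2 / 2)) ^ s.card := by
  have := hY.isProbabilityMeasure
  rw [← ofReal_measureReal, ← ENNReal.ofReal_pow (Real.exp_nonneg _), ← Real.exp_nat_mul]
  refine ENNReal.ofReal_le_ofReal ((HasSubgaussianMGF.measure_sum_ge_le_of_iIndepFun hY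
    (fun i _ => hsub i) (by positivity)).trans (le_of_eq ?_))
  congr 1
  rcases eq_or_ne s.card 0 with hs | hs
  · simp [hs]
  · simp only [Finset.sum_const, nsmul_eq_mul, mul_one, NNReal.coe_natCast]
    field_simp

end Concentration

lemma frogS_zero {Ω : Type*} (X : ℤ → ℕ → Ω → ℤ) (ω : Ω) (i : ℤ) : frogS X ω i 0 = 0 := by
  simp [frogS]

lemma frogS_succ {Ω : Type*} (X : ℤ → ℕ → Ω → ℤ) (ω : Ω) (i : ℤ) (n : ℕ) :
    frogS X ω i (n + 1) = frogS X ω i n + X i (n + 1) ω :=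
  Finset.sum_Icc_succ_top (by omega) _

namespace IsFrogModel

variable {Ω : Type*} [MeasurableSpace Ω] {P : Measure Ω} [IsProbabilityMeasure P]
  {X : ℤ → ℕ → Ω → ℤ} {p : ℝ}

lemma ae_eq_one_or_eq_neg_one (h : IsFrogModel P X p) (i : ℤ) (k : ℕ) :
    ∀ᵐ ω ∂P, X i k ω = 1 ∨ X i k ω = -1 := by
  have hA := h.meas i k (measurableSet_singleton 1)
  have hB := h.meas i k (measurableSet_singleton (-1))
  have hdisj : Disjoint {ω | X i k ω = 1} {ω | X i k ω = -1} :=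
    Set.disjoint_left.2 fun ω h1 h2 => by simp_all
  have hunion : P ({ω | X i k ω = 1} ∪ {ω | X i k ω = -1}) = 1 := by
    refine le_antisymm prob_le_one ?_
    rw [measure_union hdisj hB, h.prob_one, h.prob_neg_one]
    simpa using ENNReal.ofReal_add_le (p := p) (q := 1 - p)
  exact (prob_compl_eq_zero_iff (hA.union hB)).2 hunion

lemma ae_frogS_succ_le (h : IsFrogModel P X p) :
    ∀ᵐ ω ∂P, ∀ i n, frogS X ω i (n + 1) ≤ frogS X ω i n + 1 := by
  simp only [ae_all_iff]
  intro i n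
  filter_upwards [h.ae_eq_one_or_eq_neg_one i (n + 1)] with ω hω
  rw [frogS_succ]
  omega

lemma integral_step_eq (h : IsFrogModel P X p) (hp : 0 ≤ p) (i : ℤ) (k : ℕ) :
    ∫ ω, (X i k ω : ℝ) ∂P = 2 * p - 1 := by
  have hA : MeasurableSet {ω | X i k ω = 1} := h.meas i k (measurableSet_singleton 1)
  have hX : (fun ω => (X i k ω : ℝ)) =ᵐ[P]
      fun ω => {ω | X i k ω = 1}.indicator (fun _ => 2) ω - 1 := by
    filter_upwards [h.ae_eq_one_or_eq_neg_one i k] with ω hω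
    rcases hω with hω | hω <;> norm_num [Set.indicator, hω]
  rw [integral_congr_ae hX, integral_sub ((integrable_const _).indicator hA) (integrable_const _),
    integral_indicator_const _ hA, measureReal_def, h.prob_one, ENNReal.toReal_ofReal hp]
  simp [mul_comm]

lemma hasSubgaussianMGF_step_sub (h : IsFrogModel P X p) (hp : 0 ≤ p) (i : ℤ) (k : ℕ) :
    HasSubgaussianMGF (fun ω => (X i k ω : ℝ) - (2 * p - 1)) 1 P := by
  have hIcc : ∀ᵐ ω ∂P, (X i k ω : ℝ) ∈ Set.Icc (-1) 1 := by
    filter_upwards [h.ae_eq_one_or_eq_neg_one i k] with ω hω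
    rcases hω with hω | hω <;> simp [hω]
  have := hasSubgaussianMGF_of_mem_Icc
    (X := fun ω => (X i k ω : ℝ)) (measurable_from_top.comp (h.meas i k)).aemeasurable hIcc
  rw [h.integral_step_eq hp] at this
  convert this
  norm_num

lemma measure_le_abs_frogS_sub_le (h : IsFrogModel P X p) (hp : 0 ≤ p) {δ : ℝ} (hδ : 0 ≤ δ)
    (i : ℤ) (n : ℕ) :
    P {ω | δ * n ≤ |(frogS X ω i n : ℝ) - (2 * p - 1) * n|} ≤
      2 * ENNReal.ofReal (Real.exp (-δ ^ 2 / 2)) ^ n := by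
  set Y : ℕ → Ω → ℝ := fun k ω => (X i k ω : ℝ) - (2 * p - 1)
  have hindep : iIndepFun Y P := (h.indep.precomp (Prod.mk_right_injective i)).comp
    (fun _ z => (z : ℝ) - (2 * p - 1)) (fun _ => measurable_from_top)
  have hsum : ∀ ω, ∑ k ∈ Finset.Icc 1 n, Y k ω = (frogS X ω i n : ℝ) - (2 * p - 1) * n := by
    intro ω
    simp only [Y, frogS, Int.cast_sum, Finset.sum_sub_distrib, Finset.sum_const, Nat.card_Icc,
      add_tsub_cancel_right, nsmul_eq_mul]
    ring
  have hup := measure_mul_card_le_sum_le hindep (fun k => h.hasSubgaussianMGF_step_sub hp i k)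
    (Finset.Icc 1 n) hδ
  have hdown := measure_mul_card_le_sum_le (hindep.comp (fun _ y => -y) (fun _ => measurable_neg))
    (fun k => (h.hasSubgaussianMGF_step_sub hp i k).neg) (Finset.Icc 1 n) hδ
  simp only [Nat.card_Icc, add_tsub_cancel_right, Function.comp_apply, Finset.sum_neg_distrib,
    hsum] at hup hdown
  calc P {ω | δ * n ≤ |(frogS X ω i n : ℝ) - (2 * p - 1) * n|}
      ≤ P ({ω | δ * n ≤ (frogS X ω i n : ℝ) - (2 * p - 1) * n} ∪
          {ω | δ * n ≤ -((frogS X ω i n : ℝ) - (2 * p - 1) * n)}) :=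
        measure_mono fun _ hω => by
          simp only [Set.mem_union, Set.mem_ofPred_eq] at hω ⊢; exact le_abs.1 hω
    _ ≤ _ := (measure_union_le _ _).trans ((add_le_add hup hdown).trans_eq (two_mul _).symm)

lemma ae_eventually_forall_ge_abs_frogS_sub_lt (h : IsFrogModel P X p) (hp : 0 ≤ p)
    (j : ℕ → ℤ) {δ : ℝ} (hδ : 0 < δ) :
    ∀ᵐ ω ∂P, ∀ᶠ i in atTop, ∀ n ≥ i, |(frogS X ω (j i) n : ℝ) - (2 * p - 1) * n| < δ * n := by
  have hr : ENNReal.ofReal (Real.exp (-δ ^ 2 / 2)) < 1 :=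
    ENNReal.ofReal_lt_one.2 (Real.exp_lt_one_iff.2 (by nlinarith))
  filter_upwards [ae_eventually_forall_ge_notMem ENNReal.ofNat_ne_top hr
    fun i n => h.measure_le_abs_frogS_sub_le hp hδ.le (j i) n] with ω hω
  filter_upwards [hω] with i hi n hn
  simpa using hi n hn

lemma ae_tendsto_frogS_div (h : IsFrogModel P X p) (hp : 0 ≤ p) :
    ∀ᵐ ω ∂P, ∀ a : ℕ → ℕ, (∀ i, i ≤ a i) →
      Tendsto (fun i : ℕ => (frogS X ω i (a i) : ℝ) / a i) atTop (𝓝 (2 * p - 1)) := by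
  have hm : ∀ m : ℕ, ∀ᵐ ω ∂P, ∀ᶠ i : ℕ in atTop, ∀ n ≥ i,
      |(frogS X ω i n : ℝ) - (2 * p - 1) * n| < 1 / (m + 1) * n := fun m =>
    h.ae_eventually_forall_ge_abs_frogS_sub_lt hp (fun i => i) (by positivity)
  filter_upwards [ae_all_iff.2 hm] with ω hω a ha
  rw [Metric.tendsto_atTop]
  intro ε hε
  obtain ⟨m, hm⟩ := exists_nat_one_div_lt hε
  obtain ⟨N, hN⟩ := eventually_atTop.1 (hω m)
  refine ⟨N + 1, fun i hi => ?_⟩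
  have ha0 : (0 : ℝ) < a i := by exact_mod_cast (show 0 < a i by linarith [ha i])
  rw [Real.dist_eq, div_sub' ha0.ne', abs_div, abs_of_pos ha0, div_lt_iff₀ ha0]
  calc _ < 1 / (m + 1) * (a i : ℝ) := by simpa [mul_comm] using hN i (by omega) (a i) (ha i)
    _ ≤ ε * a i := by gcongr

lemma ae_tendsto_frogS_zero_atTop (h : IsFrogModel P X p) (hp : 1 / 2 < p) :
    ∀ᵐ ω ∂P, Tendsto (fun n => (frogS X ω 0 n : ℝ)) atTop atTop := by
  filter_upwards [h.ae_eventually_forall_ge_abs_frogS_sub_lt (by linarith) (fun _ => 0)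
    (δ := p - 1 / 2) (by linarith)] with ω hω
  obtain ⟨N, hN⟩ := eventually_atTop.1 hω
  refine tendsto_atTop_mono' atTop (eventually_atTop.2 ⟨N, fun n hn => ?_⟩)
    (tendsto_natCast_atTop_atTop.const_mul_atTop (by linarith : 0 < p - 1 / 2))
  linarith [(abs_lt.1 (hN N le_rfl n hn)).1]

end IsFrogModel

theorem frog_walk_at_activation_centred_general
    {Ω : Type*} [MeasurableSpace Ω] (P : Measure Ω) [IsProbabilityMeasure P]
    (X : ℤ → ℕ → Ω → ℤ) (p : ℝ) (hmodel : IsFrogModel P X p)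
    (hp : 1 / 2 < p) (vmax : ℝ)
    (hvmax : ∀ᵐ ω ∂P, Tendsto (fun n : ℕ => (frogM (frogS X ω) n : ℝ) / n) atTop (𝓝 vmax)) :
    ∀ᵐ ω ∂P, Tendsto (fun i : ℕ =>
        ((frogS X ω i ((frogT (frogS X ω) i).toNat) : ℝ) - (i : ℝ)) /
          ((frogT (frogS X ω) i).toNat : ℝ))
      atTop (𝓝 (2 * p - 1 - vmax)) := by
  filter_upwards [hvmax, hmodel.ae_frogS_succ_le, hmodel.ae_tendsto_frogS_zero_atTop hp,
    hmodel.ae_tendsto_frogS_div (by linarith)] with ω hM hS hzero hLLN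
  set S := frogS X ω
  have hS0 : ∀ j, S j 0 = 0 := frogS_zero X ω
  have hfin : ∀ i : ℕ, frogT S i ≠ ⊤ := fun i => by
    obtain ⟨n, hn⟩ := (hzero.eventually_gt_atTop (i : ℝ)).exists
    exact frogT_ne_top_of_lt hS0 hS (Int.natCast_nonneg i) (by exact_mod_cast hn)
  have hiT : ∀ i : ℕ, i ≤ (frogT S i).toNat := fun i => by
    simpa [← ENat.natCast_le_natCast, ENat.natCast_toNat (hfin i)] using toNat_le_frogT hS0 hS i
  have hiT_div : Tendsto (fun i : ℕ => (i : ℝ) / (frogT S i).toNat) atTop (𝓝 vmax) :=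
    (hM.comp (tendsto_atTop_mono hiT tendsto_id)).congr fun i => by
      simp [frogM_frogT_toNat hS0 hS (Int.natCast_nonneg i) (hfin i)]
  simpa [sub_div] using (hLLN _ hiT).sub hiT_div

/-- **Equation (3) in the proof of Lemma 3.**
In the frog model with drift `p ∈ (1/2, 1)`, almost surely
`(S_{T_i}^i - i) / T_i → 2p - 1 - vmax` as `i → ∞` along the non-negative integers,
where `vmax` is the speed of the maximum. -/
theorem frog_walk_at_activation_centred
    {Ω : Type*} [MeasurableSpace Ω] (P : Measure Ω) [IsProbabilityMeasure P]
    (X : ℤ → ℕ → Ω → ℤ) (p : ℝ) (hmodel : IsFrogModel P X p)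
    (hp : 1 / 2 < p) (hp1 : p < 1) (vmax : ℝ)
    (hvmax : ∀ᵐ ω ∂P, Tendsto (fun n : ℕ => (frogM (frogS X ω) n : ℝ) / n) atTop (𝓝 vmax)) :
    ∀ᵐ ω ∂P, Tendsto (fun i : ℕ =>
        ((frogS X ω i ((frogT (frogS X ω) i).toNat) : ℝ) - (i : ℝ)) /
          ((frogT (frogS X ω) i).toNat : ℝ))
      atTop (𝓝 (2 * p - 1 - vmax)) :=
  frog_walk_at_activation_centred_general P X p hmodel hp vmax hvmax
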